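/- Let f₁,…,f_M ∈ L²(ℝ^s) be linearly independent. For disjoint index counts p, q ≥ 1, let V ⊆ L²((ℝ^s)^p) be the span of the functions (x₁,…,x_p) ↦ ∏_{t=1}^p f_{d(t)}(x_t) over tuples d ∈ [M]^p, let V' ⊆ L²((ℝ^s)^q) be the span of the analogous products over tuples in [M]^q, and let U ⊆ L²((ℝ^s)^{p+q}) be the span of the products over tuples in [M]^{p+q}. Suppose h ∈ U and h(x,y) = Σ_{ν=1}^R g_ν(x)·g'_ν(y) for some g_ν ∈ L²((ℝ^s)^p) and g'_ν ∈ L²((ℝ^s)^q). Let p_ν be the orthogonal projection of g_ν onto V and p'_ν the orthogonal projection of g'_ν onto V'. Then h(x,y) = Σ_{ν=1}^R p_ν(x)·p'_ν(y) (equality in L²((ℝ^s)^{p+q})). -/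

import Mathlib

/-!
Let `D = h - ∑ ν, p_ν ⊗ p'_ν`. Both terms lie in the finite span of the products `Φ_d ⊗ Ψ_e` of
monomials, hence so does `D`. By Fubini, `⟪∑ ν, a_ν ⊗ b_ν, Φ ⊗ Ψ⟫ = ∑ ν, ⟪a_ν, Φ⟫ ⟪b_ν, Ψ⟫`, and
since `g_ν - p_ν ⟂ V` and `g'_ν - p'_ν ⟂ V'` we may replace `g_ν, g'_ν` by `p_ν, p'_ν` in these
pairings. So `D` is orthogonal to a spanning set of a space containing it, and `‖D‖² = 0`.
-/

theorem sum_sum_mul_sum_eq_sum_prod {R ι κ ν : Type*} [CommSemiring R] [Fintype ι] [Fintype κ]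
    [Fintype ν] (c : ν → ι → R) (c' : ν → κ → R) (φ : ι → R) (ψ : κ → R) :
    ∑ n, (∑ i, c n i * φ i) * (∑ j, c' n j * ψ j) =
      ∑ k : ι × κ, (∑ n, c n k.1 * c' n k.2) * (φ k.1 * ψ k.2) := by
  simp only [Fintype.sum_prod_type, Finset.sum_mul_sum]
  simp only [Finset.sum_mul]
  rw [Finset.sum_comm_cycle (s := (Finset.univ : Finset ι))]
  exact Finset.sum_congr rfl fun n _ => Finset.sum_congr rfl fun i _ =>
    Finset.sum_congr rfl fun j _ => by ring

namespace MeasureTheory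

variable {𝕜 : Type*} [NormedField 𝕜]

theorem MemLp.mul_prod {α β : Type*} [MeasurableSpace α] [MeasurableSpace β]
    {μ : Measure α} {ν : Measure β} [SFinite ν] {p : ENNReal} (hp0 : p ≠ 0) (hp : p ≠ ⊤)
    {f : α → 𝕜} {g : β → 𝕜} (hf : MemLp f p μ) (hg : MemLp g p ν) :
    MemLp (fun z : α × β => f z.1 * g z.2) p (μ.prod ν) := by
  have hm : AEStronglyMeasurable (fun z : α × β => f z.1 * g z.2) (μ.prod ν) :=
    hf.1.comp_fst.mul hg.1.comp_snd
  rw [← integrable_norm_rpow_iff hm hp0 hp]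
  simp only [norm_mul, Real.mul_rpow (norm_nonneg _) (norm_nonneg _)]
  exact ((integrable_norm_rpow_iff hf.1 hp0 hp).2 hf).mul_prod
    ((integrable_norm_rpow_iff hg.1 hp0 hp).2 hg)

theorem MemLp.fintype_prod {ι E : Type*} [Fintype ι] [MeasurableSpace E]
    {μ : ι → Measure E} [∀ i, SigmaFinite (μ i)] {p : ENNReal} (hp0 : p ≠ 0) (hp : p ≠ ⊤)
    {f : ι → E → 𝕜} (hf : ∀ i, MemLp (f i) p (μ i)) :
    MemLp (fun x : ι → E => ∏ i, f i (x i)) p (Measure.pi μ) := by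
  have hm : AEStronglyMeasurable (fun x : ι → E => ∏ i, f i (x i)) (Measure.pi μ) :=
    Finset.aestronglyMeasurable_fun_prod _ fun i _ =>
      (hf i).1.comp_quasiMeasurePreserving (Measure.quasiMeasurePreserving_eval μ i)
  rw [← integrable_norm_rpow_iff hm hp0 hp]
  simp only [norm_prod, ← Real.finsetProd_rpow _ _ fun i _ => norm_nonneg _]
  exact Integrable.fintype_prod fun i => (integrable_norm_rpow_iff (hf i).1 hp0 hp).2 (hf i)

theorem integral_mul_eq_of_integral_sub_mul_eq_zero {α : Type*} [MeasurableSpace α]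
    {μ : Measure α} {u w φ : α → ℝ} (hu : Integrable (fun x => u x * φ x) μ)
    (hw : Integrable (fun x => w x * φ x) μ) (h : ∫ x, (u x - w x) * φ x ∂μ = 0) :
    ∫ x, u x * φ x ∂μ = ∫ x, w x * φ x ∂μ := by
  rw [← sub_eq_zero, ← integral_sub hu hw]
  simpa only [sub_mul] using h

theorem integral_sum_tensor_mul_tensor {α β ι : Type*} [MeasurableSpace α] [MeasurableSpace β]
    {μ : Measure α} {ν : Measure β} [SFinite μ] [SFinite ν] (s : Finset ι)
    {u : ι → α → ℝ} {v : ι → β → ℝ} {φ : α → ℝ} {ψ : β → ℝ}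
    (hu : ∀ i ∈ s, Integrable (fun x => u i x * φ x) μ)
    (hv : ∀ i ∈ s, Integrable (fun y => v i y * ψ y) ν) :
    ∫ z, (∑ i ∈ s, u i z.1 * v i z.2) * (φ z.1 * ψ z.2) ∂(μ.prod ν) =
      ∑ i ∈ s, (∫ x, u i x * φ x ∂μ) * ∫ y, v i y * ψ y ∂ν := by
  have hsplit : ∀ z : α × β, (∑ i ∈ s, u i z.1 * v i z.2) * (φ z.1 * ψ z.2) =
      ∑ i ∈ s, (u i z.1 * φ z.1) * (v i z.2 * ψ z.2) := fun z => by
    rw [Finset.sum_mul]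
    exact Finset.sum_congr rfl fun i _ => by ring
  simp only [hsplit]
  rw [integral_finsetSum s fun i hi => (hu i hi).mul_prod (hv i hi)]
  exact Finset.sum_congr rfl fun i _ =>
    integral_prod_mul (fun x => u i x * φ x) (fun y => v i y * ψ y)

theorem ae_eq_zero_of_integral_mul_eq_zero_of_mem_span {α ι : Type*} [MeasurableSpace α]
    {μ : Measure α} [Fintype ι] {b : ι → α → ℝ} (hb : ∀ k, MemLp (b k) 2 μ) {a : ι → ℝ}
    {D : α → ℝ} (hD : ∀ x, D x = ∑ k, a k * b k x)
    (horth : ∀ k, ∫ x, D x * b k x ∂μ = 0) : D =ᵐ[μ] 0 := by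
  have hDL2 : MemLp D 2 μ := by
    rw [funext hD]
    exact memLp_finsetSum _ fun k _ => (hb k).const_mul (a k)
  have hDb : ∀ k, Integrable (fun x => D x * b k x) μ := fun k => hDL2.integrable_mul (hb k)
  have hsq : (fun x => D x ^ 2) = fun x => ∑ k, a k * (D x * b k x) := by
    funext x
    rw [sq]
    nth_rewrite 2 [hD x]
    rw [Finset.mul_sum]
    exact Finset.sum_congr rfl fun k _ => by ring
  have hsq_integral : ∫ x, D x ^ 2 ∂μ = 0 := by
    rw [hsq, integral_finsetSum _ fun k _ => (hDb k).const_mul (a k)]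
    exact Finset.sum_eq_zero fun k _ => by rw [integral_const_mul, horth k, mul_zero]
  have hsq_integrable : Integrable (fun x => D x ^ 2) μ := by
    rw [hsq]
    exact integrable_finsetSum _ fun k _ => (hDb k).const_mul (a k)
  filter_upwards [(integral_eq_zero_iff_of_nonneg (fun x => sq_nonneg (D x))
    hsq_integrable).1 hsq_integral] with x hx
  exact pow_eq_zero_iff two_ne_zero |>.1 hx

theorem ae_eq_of_integral_mul_eq_of_mem_span {α ι : Type*} [MeasurableSpace α]
    {μ : Measure α} [Fintype ι] {b : ι → α → ℝ} (hb : ∀ k, MemLp (b k) 2 μ) {a a' : ι → ℝ}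
    {F G : α → ℝ} (hF : ∀ x, F x = ∑ k, a k * b k x) (hG : ∀ x, G x = ∑ k, a' k * b k x)
    (hFG : ∀ k, ∫ x, F x * b k x ∂μ = ∫ x, G x * b k x ∂μ) : F =ᵐ[μ] G := by
  have hmem : ∀ a : ι → ℝ, MemLp (fun x => ∑ k, a k * b k x) 2 μ := fun a =>
    memLp_finsetSum _ fun k _ => (hb k).const_mul (a k)
  have hFb : ∀ k, Integrable (fun x => F x * b k x) μ := fun k => by
    rw [funext hF]; exact (hmem a).integrable_mul (hb k)
  have hGb : ∀ k, Integrable (fun x => G x * b k x) μ := fun k => by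
    rw [funext hG]; exact (hmem a').integrable_mul (hb k)
  refine (ae_eq_zero_of_integral_mul_eq_zero_of_mem_span hb (a := a - a') (D := F - G)
    (fun x => ?_) fun k => ?_).mono fun x hx => sub_eq_zero.1 hx
  · simp only [Pi.sub_apply, hF, hG, sub_mul, Finset.sum_sub_distrib]
  · simp only [Pi.sub_apply, sub_mul]
    rw [integral_sub (hFb k) (hGb k), hFG k, sub_self]

theorem sum_tensor_ae_eq_of_integral_sub_mul_eq_zero {α β ι κ ρ : Type*}
    [MeasurableSpace α] [MeasurableSpace β] {μ : Measure α} {ν : Measure β} [SFinite μ]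
    [SFinite ν] [Fintype ι] [Fintype κ] [Fintype ρ] {Φ : ι → α → ℝ} {Ψ : κ → β → ℝ}
    (hΦ : ∀ i, MemLp (Φ i) 2 μ) (hΨ : ∀ j, MemLp (Ψ j) 2 ν) {g pr : ρ → α → ℝ}
    {g' pr' : ρ → β → ℝ} (hg : ∀ r, MemLp (g r) 2 μ) (hg' : ∀ r, MemLp (g' r) 2 ν)
    (c : ρ → ι → ℝ) (hc : ∀ r x, pr r x = ∑ i, c r i * Φ i x)
    (c' : ρ → κ → ℝ) (hc' : ∀ r y, pr' r y = ∑ j, c' r j * Ψ j y)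
    (horth : ∀ r i, ∫ x, (g r x - pr r x) * Φ i x ∂μ = 0)
    (horth' : ∀ r j, ∫ y, (g' r y - pr' r y) * Ψ j y ∂ν = 0)
    (C : ι → κ → ℝ) (hU : ∀ x y, ∑ r, g r x * g' r y = ∑ i, ∑ j, C i j * (Φ i x * Ψ j y)) :
    (fun z : α × β => ∑ r, pr r z.1 * pr' r z.2) =ᵐ[μ.prod ν]
      fun z => ∑ r, g r z.1 * g' r z.2 := by
  have hpr : ∀ r, MemLp (pr r) 2 μ := fun r => by
    rw [funext (hc r)]; exact memLp_finsetSum _ fun i _ => (hΦ i).const_mul (c r i)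
  have hpr' : ∀ r, MemLp (pr' r) 2 ν := fun r => by
    rw [funext (hc' r)]; exact memLp_finsetSum _ fun j _ => (hΨ j).const_mul (c' r j)
  have hgpr : ∀ r i, ∫ x, g r x * Φ i x ∂μ = ∫ x, pr r x * Φ i x ∂μ := fun r i =>
    integral_mul_eq_of_integral_sub_mul_eq_zero ((hg r).integrable_mul (hΦ i))
      ((hpr r).integrable_mul (hΦ i)) (horth r i)
  have hgpr' : ∀ r j, ∫ y, g' r y * Ψ j y ∂ν = ∫ y, pr' r y * Ψ j y ∂ν := fun r j =>
    integral_mul_eq_of_integral_sub_mul_eq_zero ((hg' r).integrable_mul (hΨ j))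
      ((hpr' r).integrable_mul (hΨ j)) (horth' r j)
  refine ae_eq_of_integral_mul_eq_of_mem_span
    (b := fun (k : ι × κ) (z : α × β) => Φ k.1 z.1 * Ψ k.2 z.2)
    (fun k => (hΦ k.1).mul_prod two_ne_zero ENNReal.ofNat_ne_top (hΨ k.2))
    (a := fun k => ∑ r, c r k.1 * c' r k.2) (a' := fun k => C k.1 k.2) (fun z => ?_)
    (fun z => by rw [Fintype.sum_prod_type]; exact hU z.1 z.2) fun k => ?_
  · simp only [hc, hc']
    exact sum_sum_mul_sum_eq_sum_prod c c' (Φ · z.1) (Ψ · z.2)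
  · rw [integral_sum_tensor_mul_tensor _ (fun r _ => (hpr r).integrable_mul (hΦ k.1))
        (fun r _ => (hpr' r).integrable_mul (hΨ k.2)),
      integral_sum_tensor_mul_tensor _ (fun r _ => (hg r).integrable_mul (hΦ k.1))
        (fun r _ => (hg' r).integrable_mul (hΨ k.2))]
    simp only [hgpr, hgpr']

end MeasureTheory

open MeasureTheory

theorem stmt17_general (s M p q : ℕ)
    (f : Fin M → (Fin s → ℝ) → ℝ)
    (hf2 : ∀ j, MemLp (f j) 2 volume)
    (h : (Fin p → (Fin s → ℝ)) × (Fin q → (Fin s → ℝ)) → ℝ)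
    -- `h ∈ U`, the span of the products of the representation functions:
    (C : (Fin p → Fin M) → (Fin q → Fin M) → ℝ)
    (hhU : ∀ (x : Fin p → (Fin s → ℝ)) (y : Fin q → (Fin s → ℝ)),
      h (x, y) = ∑ d : Fin p → Fin M, ∑ e : Fin q → Fin M,
        C d e * ((∏ t, f (d t) (x t)) * (∏ t, f (e t) (y t))))
    (R : ℕ)
    (g : Fin R → (Fin p → (Fin s → ℝ)) → ℝ)
    (g' : Fin R → (Fin q → (Fin s → ℝ)) → ℝ)
    (hg2 : ∀ ν, MemLp (g ν) 2 volume)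
    (hg'2 : ∀ ν, MemLp (g' ν) 2 volume)
    (hdec : ∀ x y, h (x, y) = ∑ ν, g ν x * g' ν y)
    (pproj : Fin R → (Fin p → (Fin s → ℝ)) → ℝ)
    (p'proj : Fin R → (Fin q → (Fin s → ℝ)) → ℝ)
    -- `pproj ν ∈ V` and `p'proj ν ∈ V'`:
    (hpV : ∀ ν, ∃ c : (Fin p → Fin M) → ℝ,
      pproj ν = fun x => ∑ d : Fin p → Fin M, c d * ∏ t, f (d t) (x t))
    (hp'V : ∀ ν, ∃ c : (Fin q → Fin M) → ℝ,
      p'proj ν = fun y => ∑ e : Fin q → Fin M, c e * ∏ t, f (e t) (y t))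
    -- `g ν - pproj ν ⟂ V` and `g' ν - p'proj ν ⟂ V'`:
    (hporth : ∀ ν (d : Fin p → Fin M),
      ∫ x : Fin p → (Fin s → ℝ), (g ν x - pproj ν x) * ∏ t, f (d t) (x t) = 0)
    (hp'orth : ∀ ν (e : Fin q → Fin M),
      ∫ y : Fin q → (Fin s → ℝ), (g' ν y - p'proj ν y) * ∏ t, f (e t) (y t) = 0) :
    (fun z : (Fin p → (Fin s → ℝ)) × (Fin q → (Fin s → ℝ)) =>
        ∑ ν, pproj ν z.1 * p'proj ν z.2) =ᵐ[volume] h := by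
  choose c hc using hpV
  choose c' hc' using hp'V
  have hmonomial : ∀ {n} (d : Fin n → Fin M),
      MemLp (fun x : Fin n → (Fin s → ℝ) => ∏ t, f (d t) (x t)) 2 volume := fun d =>
    MemLp.fintype_prod two_ne_zero ENNReal.ofNat_ne_top fun t => hf2 (d t)
  rw [show h = fun z => ∑ ν, g ν z.1 * g' ν z.2 from funext fun z => hdec z.1 z.2,
    Measure.volume_eq_prod]
  exact sum_tensor_ae_eq_of_integral_sub_mul_eq_zero hmonomial hmonomial hg2 hg'2
    c (fun ν => congrFun (hc ν)) c' (fun ν => congrFun (hc' ν)) hporth hp'orth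
    C fun x y => (hdec x y).symm.trans (hhU x y)

theorem stmt17 (s M p q : ℕ) (hp : 1 ≤ p) (hq : 1 ≤ q)
    (f : Fin M → (Fin s → ℝ) → ℝ)
    (hfm : ∀ j, Measurable (f j)) (hf2 : ∀ j, MemLp (f j) 2 volume)
    (hfind : LinearIndependent ℝ f)
    (h : (Fin p → (Fin s → ℝ)) × (Fin q → (Fin s → ℝ)) → ℝ)
    -- `h ∈ U`, the span of the products of the representation functions:
    (C : (Fin p → Fin M) → (Fin q → Fin M) → ℝ)
    (hhU : ∀ (x : Fin p → (Fin s → ℝ)) (y : Fin q → (Fin s → ℝ)),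
      h (x, y) = ∑ d : Fin p → Fin M, ∑ e : Fin q → Fin M,
        C d e * ((∏ t, f (d t) (x t)) * (∏ t, f (e t) (y t))))
    (R : ℕ)
    (g : Fin R → (Fin p → (Fin s → ℝ)) → ℝ)
    (g' : Fin R → (Fin q → (Fin s → ℝ)) → ℝ)
    (hgm : ∀ ν, Measurable (g ν)) (hg2 : ∀ ν, MemLp (g ν) 2 volume)
    (hg'm : ∀ ν, Measurable (g' ν)) (hg'2 : ∀ ν, MemLp (g' ν) 2 volume)
    (hdec : ∀ x y, h (x, y) = ∑ ν, g ν x * g' ν y)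
    (pproj : Fin R → (Fin p → (Fin s → ℝ)) → ℝ)
    (p'proj : Fin R → (Fin q → (Fin s → ℝ)) → ℝ)
    -- `pproj ν ∈ V` and `p'proj ν ∈ V'`:
    (hpV : ∀ ν, ∃ c : (Fin p → Fin M) → ℝ,
      pproj ν = fun x => ∑ d : Fin p → Fin M, c d * ∏ t, f (d t) (x t))
    (hp'V : ∀ ν, ∃ c : (Fin q → Fin M) → ℝ,
      p'proj ν = fun y => ∑ e : Fin q → Fin M, c e * ∏ t, f (e t) (y t))
    -- `g ν - pproj ν ⟂ V` and `g' ν - p'proj ν ⟂ V'`: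
    (hporth : ∀ ν (d : Fin p → Fin M),
      ∫ x : Fin p → (Fin s → ℝ), (g ν x - pproj ν x) * ∏ t, f (d t) (x t) = 0)
    (hp'orth : ∀ ν (e : Fin q → Fin M),
      ∫ y : Fin q → (Fin s → ℝ), (g' ν y - p'proj ν y) * ∏ t, f (e t) (y t) = 0) :
    (fun z : (Fin p → (Fin s → ℝ)) × (Fin q → (Fin s → ℝ)) =>
        ∑ ν, pproj ν z.1 * p'proj ν z.2) =ᵐ[volume] h :=
  stmt17_general s M p q f hf2 h C hhU R g g' hg2 hg'2 hdec pproj p'proj hpV hp'V hporth hp'orth
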